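/- arXiv:1507.01957 — 3 statements merged into one kernel-verified Lean document; each statement's English description precedes it below -/
import Mathlib

section
/- Let (X|Y) be an n×2n matrix of rank n over a field of characteristic 0 with X Yᵗ symmetric, and let 𝓑 be the collection of admissible n-subsets B of [n]∪[n]* such that the n columns indexed by B are linearly independent. Then 𝓑 satisfies the symmetric exchange axiom, i.e. 𝓑 is a Lagrangian matroid. -/
/-- The involution `*` on `[n] ∪ [n]*`, encoded as `Fin n × Bool`:
`(j, true)` is the column `j` of `X`, `(j, false)` is the column `j*` of `Y`. -/
def dstar {n : ℕ} (x : Fin n × Bool) : Fin n × Bool := (x.1, !x.2)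

/-- An admissible `n`-subset of `[n] ∪ [n]*`. -/
def Admissible {n : ℕ} (A : Finset (Fin n × Bool)) : Prop :=
  A.card = n ∧ ∀ x ∈ A, dstar x ∉ A

/-- The column of `(X|Y)` indexed by an element of `[n] ∪ [n]*`. -/
def col {F : Type*} [Field F] {n : ℕ} (X Y : Matrix (Fin n) (Fin n) F)
    (x : Fin n × Bool) : Fin n → F :=
  fun i => if x.2 then X i x.1 else Y i x.1

/-!
Write an admissible set as the graph of `s : Fin n → Bool` and let `N_s` be the matrix of the
columns it selects. When `N_s` is invertible, pivoting on it gives `M = N_s⁻¹ N_{¬s}`, and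
`det N_t = det N_s · det M[S]` for every `t`, where `M[S]` is the principal submatrix of `M` on
the set `S` of indices at which `t` and `s` differ. Symmetry of `X Yᵀ` makes `M` symmetric up to
signs, so `M i k = 0 ↔ M k i = 0`. Hence, if `M[S]` is nonsingular and `j ∈ S`, row `j` of
`M[S]` is nonzero, which forces a nonzero principal minor `M[{j, k}]` with `k ∈ S` (possibly
`k = j`); this minor is the determinant governing the exchange `A △ {j, j*, k, k*}`.
-/

open Matrix

section PickCols

variable {m ι R : Type*}

def pickCols (A B : Matrix m ι R) (p : ι → Prop) [DecidablePred p] : Matrix m ι R :=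
  Matrix.of fun i k => if p k then A i k else B i k

theorem mul_pickCols [Fintype m] [NonUnitalNonAssocSemiring R] (P : Matrix m m R)
    (A B : Matrix m ι R) (p : ι → Prop) [DecidablePred p] :
    P * pickCols A B p = pickCols (P * A) (P * B) p := by
  ext i k
  by_cases hk : p k <;> simp [pickCols, mul_apply, hk]

theorem pickCols_pickCols_swap (A B : Matrix m ι R) (s t : ι → Bool) :
    pickCols (pickCols A B (s · = true)) (pickCols B A (s · = true)) (fun k => t k = s k) =
      pickCols A B (t · = true) := by
  ext i k
  cases hs : s k <;> cases ht : t k <;> simp [pickCols, hs, ht]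

variable [Fintype ι] [DecidableEq ι]

theorem det_pickCols_one [CommRing R] (M : Matrix ι ι R) (p : ι → Prop) [DecidablePred p] :
    (pickCols 1 M p).det = (M.toSquareBlockProp fun k => ¬ p k).det := by
  rw [twoBlockTriangular_det' _ (fun k => ¬ p k)]
  · have hid : (pickCols 1 M p).toSquareBlockProp (fun k => ¬¬ p k) = 1 := by
      ext i j
      simp [toSquareBlockProp_def, pickCols, not_not.1 j.2, one_apply, Subtype.ext_iff]
    have hM : (pickCols 1 M p).toSquareBlockProp (fun k => ¬ p k) =
        M.toSquareBlockProp fun k => ¬ p k := by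
      ext i j
      simp [toSquareBlockProp_def, pickCols, j.2]
    rw [hid, hM, det_one, mul_one]
  · intro i hi j hj
    have hij : i ≠ j := fun h => hj (h ▸ hi)
    simp [pickCols, not_not.1 hj, one_apply_ne hij]

theorem pickCols_one_mul_transpose_apply [NonAssocSemiring R] (M : Matrix ι ι R)
    (p q : ι → Prop) [DecidablePred p] [DecidablePred q] (hpq : ∀ k, q k ↔ ¬ p k)
    (a b : ι) :
    (pickCols 1 M p * (pickCols 1 M q)ᵀ) a b =
      (if p a then M b a else 0) + (if p b then 0 else M a b) := by
  have hterm : ∀ l, pickCols 1 M p a l * pickCols 1 M q b l =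
      (if l = a then (if p l then M b l else 0) else 0) +
        (if l = b then (if p l then 0 else M a l) else 0) := by
    intro l
    by_cases hl : p l <;>
      simp [pickCols, hpq, hl, one_apply, eq_comm (a := l)]
  simp only [mul_apply, transpose_apply, hterm, Finset.sum_add_distrib, Finset.sum_ite_eq',
    Finset.mem_univ, if_true]

end PickCols

section Pivot

variable {ι F : Type*} [Fintype ι] [DecidableEq ι] [Field F]

noncomputable def pivot (X Y : Matrix ι ι F) (s : ι → Bool) : Matrix ι ι F :=
  (pickCols X Y (s · = true))⁻¹ * pickCols Y X (s · = true)

variable {X Y : Matrix ι ι F} {s : ι → Bool}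

theorem inv_mul_pickCols (hs : (pickCols X Y (s · = true)).det ≠ 0) (t : ι → Bool) :
    (pickCols X Y (s · = true))⁻¹ * pickCols X Y (t · = true) =
      pickCols 1 (pivot X Y s) (fun k => t k = s k) := by
  rw [← pickCols_pickCols_swap X Y s t, mul_pickCols,
    nonsing_inv_mul _ (isUnit_iff_ne_zero.2 hs)]
  rfl

theorem det_pickCols_eq_mul_det_pivot (hs : (pickCols X Y (s · = true)).det ≠ 0)
    (t : ι → Bool) :
    (pickCols X Y (t · = true)).det =
      (pickCols X Y (s · = true)).det *
        ((pivot X Y s).toSquareBlockProp fun k => t k ≠ s k).det := by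
  calc (pickCols X Y (t · = true)).det
      = (pickCols X Y (s · = true) *
          ((pickCols X Y (s · = true))⁻¹ * pickCols X Y (t · = true))).det := by
        rw [mul_nonsing_inv_cancel_left _ _ (isUnit_iff_ne_zero.2 hs)]
    _ = _ := by rw [det_mul, inv_mul_pickCols hs, det_pickCols_one]

theorem pivot_apply_comm (hs : (pickCols X Y (s · = true)).det ≠ 0)
    (hsymm : (X * Yᵀ).IsSymm) (i k : ι) :
    pivot X Y s k i = if s i = s k then pivot X Y s i k else -pivot X Y s i k := by
  set P := (pickCols X Y (s · = true))⁻¹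
  have hX : P * X = pickCols 1 (pivot X Y s) (fun k => true = s k) := by
    rw [← inv_mul_pickCols hs]; congr 1
  have hY : P * Y = pickCols 1 (pivot X Y s) (fun k => false = s k) := by
    rw [← inv_mul_pickCols hs]; congr 1
  have hG : (P * X * (P * Y)ᵀ).IsSymm := by
    have hconj : P * X * (P * Y)ᵀ = P * (X * Yᵀ) * Pᵀ := by
      rw [transpose_mul, Matrix.mul_assoc, Matrix.mul_assoc, Matrix.mul_assoc]
    rw [hconj, IsSymm, transpose_mul, transpose_transpose, transpose_mul, hsymm.eq,
      ← Matrix.mul_assoc]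
  have h := hG.apply i k
  rw [hX, hY, pickCols_one_mul_transpose_apply _ _ _ (by simp),
    pickCols_one_mul_transpose_apply _ _ _ (by simp)] at h
  cases hi : s i <;> cases hk : s k <;> simp [hi, hk] at h ⊢ <;> grind

end Pivot

section PrincipalMinors

variable {ι R : Type*} [Fintype ι] [DecidableEq ι] [CommRing R]

theorem det_toSquareBlockProp_pair (M : Matrix ι ι R) (j k : ι) :
    (M.toSquareBlockProp fun x => x = j ∨ x = k).det =
      if j = k then M j j else M j j * M k k - M j k * M k j := by
  split_ifs with hjk
  · subst hjk
    let _ : Unique {x // x = j ∨ x = j} :=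
      ⟨⟨⟨j, Or.inl rfl⟩⟩, fun x => Subtype.ext (x.2.elim id id)⟩
    rw [det_unique]
    rfl
  · let e : Fin 2 ≃ {x // x = j ∨ x = k} :=
      Equiv.ofBijective ![⟨j, Or.inl rfl⟩, ⟨k, Or.inr rfl⟩] <| by
        refine ⟨fun a b hab => ?_, fun ⟨x, hx⟩ => ?_⟩
        · fin_cases a <;> fin_cases b <;> simp_all [Subtype.ext_iff, eq_comm]
        · rcases hx with rfl | rfl
          exacts [⟨0, rfl⟩, ⟨1, rfl⟩]
    rw [← det_submatrix_equiv_self e, det_fin_two]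
    rfl

theorem exists_det_toSquareBlockProp_pair_ne_zero [NoZeroDivisors R] (M : Matrix ι ι R)
    (hM : ∀ i k, M i k = 0 → M k i = 0) (p : ι → Prop) [DecidablePred p]
    (hp : (M.toSquareBlockProp p).det ≠ 0) {j : ι} (hj : p j) :
    ∃ k, p k ∧ (M.toSquareBlockProp fun x => x = j ∨ x = k).det ≠ 0 := by
  by_contra! h
  have hjj : M j j = 0 := by simpa [det_toSquareBlockProp_pair] using h j hj
  refine hp (det_eq_zero_of_row_eq_zero ⟨j, hj⟩ fun ⟨k, hk⟩ => ?_)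
  rw [toSquareBlockProp_def, of_apply]
  by_cases hjk : j = k
  · subst hjk; exact hjj
  · have hpair := h k hk
    rw [det_toSquareBlockProp_pair, if_neg hjk, hjj, zero_mul, zero_sub, neg_eq_zero] at hpair
    rcases mul_eq_zero.1 hpair with hjk' | hkj
    exacts [hjk', hM k j hkj]

end PrincipalMinors

section Graph

variable {α β : Type*} [Fintype α]

def graphFinset (f : α → β) : Finset (α × β) :=
  Finset.univ.map ⟨fun a => (a, f a), fun _ _ h => (Prod.ext_iff.1 h).1⟩

theorem mem_graphFinset {f : α → β} {x : α × β} : x ∈ graphFinset f ↔ f x.1 = x.2 := by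
  rcases x with ⟨a, b⟩
  simp only [graphFinset, Finset.mem_map, Finset.mem_univ, true_and]
  exact ⟨fun ⟨_, h⟩ => by cases h; rfl, fun h => ⟨a, by rw [← h]; rfl⟩⟩

theorem card_graphFinset (f : α → β) : (graphFinset f).card = Fintype.card α := by
  simp [graphFinset]

theorem symmDiff_graphFinset_filter [DecidableEq α] (s : α → Bool) (p : α → Prop)
    [DecidablePred p] :
    symmDiff (graphFinset s) ({x | p x.1} : Finset (α × Bool)) =
      graphFinset fun i => if p i then !s i else s i := by
  ext ⟨a, b⟩
  by_cases ha : p a <;> cases b <;> cases hs : s a <;>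
    simp [Finset.mem_symmDiff, mem_graphFinset, ha, hs]

end Graph

section Admissible

variable {n : ℕ}

theorem admissible_iff_exists_eq_graphFinset {A : Finset (Fin n × Bool)} :
    Admissible A ↔ ∃ s : Fin n → Bool, A = graphFinset s := by
  constructor
  · rintro ⟨hcard, hA⟩
    refine ⟨fun i => decide ((i, true) ∈ A), Finset.eq_of_subset_of_card_le ?_ ?_⟩
    · rintro ⟨i, b⟩ hx
      cases b
      · have : (i, true) ∉ A := hA _ hx
        simp [mem_graphFinset, this]
      · simp [mem_graphFinset, hx]
    · rw [card_graphFinset, Fintype.card_fin, hcard]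
  · rintro ⟨s, rfl⟩
    refine ⟨by rw [card_graphFinset, Fintype.card_fin], fun x hx hx' => ?_⟩
    rw [mem_graphFinset] at hx hx'
    cases h : x.2 <;> simp_all [dstar]

theorem insert_dstar_eq_filter (j k : Fin n × Bool) :
    ({j, dstar j, k, dstar k} : Finset (Fin n × Bool)) =
      ({x | x.1 = j.1 ∨ x.1 = k.1} : Finset (Fin n × Bool)) := by
  ext ⟨a, b⟩
  rcases j with ⟨j, c⟩
  rcases k with ⟨k, d⟩
  cases b <;> cases c <;> cases d <;> simp [dstar]

theorem linearIndependent_col_graphFinset_iff {F : Type*} [Field F]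
    (X Y : Matrix (Fin n) (Fin n) F) (s : Fin n → Bool) :
    LinearIndependent F (fun b : {x // x ∈ graphFinset s} => col X Y b.1) ↔
      (pickCols X Y (s · = true)).det ≠ 0 := by
  let e : Fin n ≃ {x // x ∈ graphFinset s} :=
    Equiv.ofBijective (fun i => ⟨(i, s i), mem_graphFinset.2 rfl⟩) <| by
      refine ⟨fun a b hab => congrArg (·.1.1) hab, fun ⟨⟨i, b⟩, hx⟩ => ⟨i, ?_⟩⟩
      obtain rfl : s i = b := mem_graphFinset.1 hx
      rfl
  rw [← linearIndependent_equiv e, ← isUnit_iff_ne_zero, ← isUnit_iff_isUnit_det,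
    ← linearIndependent_cols_iff_isUnit]
  rfl

end Admissible

theorem representable_is_lagrangian_general {F : Type*} [Field F] {n : ℕ}
    (X Y : Matrix (Fin n) (Fin n) F)
    (hsymm : (X * Y.transpose).IsSymm) :
    ∀ A ∈ {B : Finset (Fin n × Bool) | Admissible B ∧
        LinearIndependent F (fun b : {x // x ∈ B} => col X Y b.1)},
      ∀ B ∈ {B : Finset (Fin n × Bool) | Admissible B ∧
        LinearIndependent F (fun b : {x // x ∈ B} => col X Y b.1)},
      ∀ j ∈ symmDiff A B, ∃ k ∈ symmDiff B A,
        symmDiff A {j, dstar j, k, dstar k} ∈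
          {B : Finset (Fin n × Bool) | Admissible B ∧
            LinearIndependent F (fun b : {x // x ∈ B} => col X Y b.1)} := by
  rintro A ⟨hA, hAli⟩ B ⟨hB, hBli⟩ j hj
  obtain ⟨s, rfl⟩ := admissible_iff_exists_eq_graphFinset.1 hA
  obtain ⟨t, rfl⟩ := admissible_iff_exists_eq_graphFinset.1 hB
  rw [linearIndependent_col_graphFinset_iff] at hAli hBli
  have hjts : t j.1 ≠ s j.1 := by
    rcases Finset.mem_symmDiff.1 hj with ⟨hjA, hjB⟩ | ⟨hjB, hjA⟩ <;>
      rw [mem_graphFinset] at hjA hjB <;> grind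
  have hzero : ∀ i k, pivot X Y s i k = 0 → pivot X Y s k i = 0 := fun i k h => by
    rw [pivot_apply_comm hAli hsymm, h, neg_zero, ite_self]
  rw [det_pickCols_eq_mul_det_pivot hAli] at hBli
  obtain ⟨k, hkts, hpair⟩ := exists_det_toSquareBlockProp_pair_ne_zero _ hzero
    (fun k => t k ≠ s k) (right_ne_zero_of_mul hBli) hjts
  refine ⟨(k, t k), Finset.mem_symmDiff.2 <| Or.inl
    ⟨mem_graphFinset.2 rfl, fun h => hkts (mem_graphFinset.1 h).symm⟩, ?_⟩
  rw [insert_dstar_eq_filter]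
  dsimp only
  rw [symmDiff_graphFinset_filter s fun i => i = j.1 ∨ i = k]
  refine ⟨admissible_iff_exists_eq_graphFinset.2 ⟨_, rfl⟩, ?_⟩
  rw [linearIndependent_col_graphFinset_iff, det_pickCols_eq_mul_det_pivot hAli,
    equiv_block_det _ (q := fun x => x = j.1 ∨ x = k)]
  · exact mul_ne_zero hAli hpair
  · intro x
    by_cases hx : x = j.1 ∨ x = k <;> simp [hx]

/-- For an `n × 2n` matrix `(X|Y)` of rank `n` with `X Yᵗ` symmetric, the
collection of admissible `n`-subsets whose columns are linearly independent
satisfies the symmetric exchange axiom (it is a Lagrangian matroid). -/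
theorem representable_is_lagrangian {F : Type*} [Field F] [CharZero F] {n : ℕ}
    (X Y : Matrix (Fin n) (Fin n) F)
    (hrank : (Matrix.fromCols X Y).rank = n)
    (hsymm : (X * Y.transpose).IsSymm) :
    ∀ A ∈ {B : Finset (Fin n × Bool) | Admissible B ∧
        LinearIndependent F (fun b : {x // x ∈ B} => col X Y b.1)},
      ∀ B ∈ {B : Finset (Fin n × Bool) | Admissible B ∧
        LinearIndependent F (fun b : {x // x ∈ B} => col X Y b.1)},
      ∀ j ∈ symmDiff A B, ∃ k ∈ symmDiff B A,
        symmDiff A {j, dstar j, k, dstar k} ∈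
          {B : Finset (Fin n × Bool) | Admissible B ∧
            LinearIndependent F (fun b : {x // x ∈ B} => col X Y b.1)} :=
  representable_is_lagrangian_general X Y hsymm
end

section
/- Transitivity is preserved under partial duality by transpositions from α: if σ, α, φ ∈ S_{2n} with σ α φ = 1, ⟨σ, α⟩ acts transitively on [2n], α is a fixed-point free involution with disjoint transposition factor c_j, then ⟨σ c_j, α⟩ also acts transitively on [2n]. -/
open MulAction Equiv

theorem Subgroup.smul_mem_orbit_of_mem_closure {G X : Type*} [Group G] [MulAction G X]
    (H : Subgroup G) {S : Set G} (hS : ∀ s ∈ S, ∀ x : X, s • x ∈ orbit H x)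
    {g : G} (hg : g ∈ Subgroup.closure S) (x : X) : g • x ∈ orbit H x := by
  induction hg using Subgroup.closure_induction generalizing x with
  | mem s hs => exact hS s hs x
  | one => rw [one_smul]; exact mem_orbit_self x
  | mul g h _ _ ihg ihh =>
    rw [mul_smul, ← orbit_eq_iff.2 (ihh x)]
    exact ihg (h • x)
  | inv g _ ihg =>
    have hx : x ∈ orbit H (g⁻¹ • x) := by simpa using ihg (g⁻¹ • x)
    rw [orbit_eq_iff.2 hx]
    exact mem_orbit_self _

/-- On the support of the swap `c`, `α` agrees with `c = c⁻¹`, so there `σ` agrees with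
`σ * c * α`; off the support it agrees with `σ * c`. -/
theorem Equiv.Perm.apply_mem_orbit_closure_mul_swap {X : Type*} [DecidableEq X] [Fintype X]
    (σ α c : Perm X) (hc : c.IsSwap) (hα : ∀ x ∈ c.support, α x = c x) (x : X) :
    σ x ∈ orbit (Subgroup.closure {σ * c, α}) x := by
  have hσc : σ * c ∈ Subgroup.closure {σ * c, α} := Subgroup.subset_closure (by simp)
  have hα' : α ∈ Subgroup.closure {σ * c, α} := Subgroup.subset_closure (by simp)
  by_cases hx : x ∈ c.support
  · obtain ⟨y, z, -, rfl⟩ := hc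
    refine ⟨⟨σ * swap y z * α, mul_mem hσc hα'⟩, ?_⟩
    simp [Perm.smul_def, hα x hx]
  · refine ⟨⟨σ * c, hσc⟩, ?_⟩
    simp [Perm.smul_def, Perm.notMem_support.mp hx]

theorem partial_dual_transitive_general {n : ℕ} (σ α cj : Equiv.Perm (Fin (2 * n)))
    (htrans : ∀ a b : Fin (2 * n), ∃ g ∈ Subgroup.closure ({σ, α} :
      Set (Equiv.Perm (Fin (2 * n)))), g a = b)
    (hswap : cj.IsSwap) (hfactor : ∀ x ∈ cj.support, α x = cj x) :
    ∀ a b : Fin (2 * n), ∃ g ∈ Subgroup.closure ({σ * cj, α} :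
      Set (Equiv.Perm (Fin (2 * n)))), g a = b := by
  intro a b
  obtain ⟨g, hg, rfl⟩ := htrans a b
  have hgens : ∀ s ∈ ({σ, α} : Set (Perm (Fin (2 * n)))), ∀ x : Fin (2 * n),
      s • x ∈ orbit (Subgroup.closure {σ * cj, α}) x := by
    rintro s (rfl | rfl) x
    · exact s.apply_mem_orbit_closure_mul_swap α cj hswap hfactor x
    · exact mem_orbit x (⟨s, Subgroup.subset_closure (by simp)⟩ : Subgroup.closure _)
  obtain ⟨⟨h, hh⟩, e⟩ := Subgroup.smul_mem_orbit_of_mem_closure _ hgens hg a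
  exact ⟨h, hh, e⟩

/-- Transitivity is preserved under partial duality: if `⟨σ, α⟩` acts
transitively on `[2n]`, `α` is a fixed-point free involution and `c_j` is one
of the transpositions in its disjoint cycle decomposition, then `⟨σ c_j, α⟩`
is also transitive. -/
theorem partial_dual_transitive {n : ℕ} (σ α cj : Equiv.Perm (Fin (2 * n)))
    (htrans : ∀ a b : Fin (2 * n), ∃ g ∈ Subgroup.closure ({σ, α} :
      Set (Equiv.Perm (Fin (2 * n)))), g a = b)
    (hinv : α * α = 1) (hfpf : ∀ x, α x ≠ x)
    (hswap : cj.IsSwap) (hfactor : ∀ x ∈ cj.support, α x = cj x) :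
    ∀ a b : Fin (2 * n), ∃ g ∈ Subgroup.closure ({σ * cj, α} :
      Set (Equiv.Perm (Fin (2 * n)))), g a = b :=
  partial_dual_transitive_general σ α cj htrans hswap hfactor
end

section
/- Euler genus formula via permutations: for a map 𝓜 = ⟨σ,α,φ⟩ on a closed orientable surface of genus g with n edges, the number of disjoint cycles satisfies n(σ) − n(α) + n(φ) = 2 − 2g; in particular n(σ) + n(φ) ≡ n (mod 2), i.e. n(σ) − n + n(φ) is even. -/
/-- The number of disjoint cycles of a permutation, counting fixed points as
cycles of length 1. -/
def ncyc {m : ℕ} (g : Equiv.Perm (Fin m)) : ℕ :=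
  Multiset.card g.cycleType + (Finset.univ.filter fun x => g x = x).card

namespace EulerGenusAux

open Equiv
set_option linter.unusedSectionVars false
set_option linter.unusedVariables false
set_option linter.unnecessarySimpa false

variable {β : Type*} [Fintype β] [DecidableEq β]


def R (H : Subgroup (Perm β)) (a b : β) : Prop := ∃ p ∈ H, p a = b

theorem R_equiv (H : Subgroup (Perm β)) : Equivalence (R H) where
  refl x := ⟨1, H.one_mem, rfl⟩
  symm := by rintro a b ⟨p, hp, rfl⟩; exact ⟨p⁻¹, H.inv_mem hp, p.symm_apply_apply a⟩
  trans := by rintro a b c ⟨p, hp, rfl⟩ ⟨q, hq, rfl⟩; exact ⟨q*p, H.mul_mem hq hp, rfl⟩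

theorem R_refl (H : Subgroup (Perm β)) (a : β) : R H a a := (R_equiv H).refl a
theorem R_symm {H : Subgroup (Perm β)} {a b : β} : R H a b → R H b a := (R_equiv H).symm
theorem R_trans {H : Subgroup (Perm β)} {a b c : β} : R H a b → R H b c → R H a c :=
  (R_equiv H).trans
theorem R_mono {H K : Subgroup (Perm β)} (h : H ≤ K) {a b : β} : R H a b → R K a b := by
  rintro ⟨p, hp, rfl⟩; exact ⟨p, h hp, rfl⟩

def oS (H : Subgroup (Perm β)) : Setoid β := ⟨R H, R_equiv H⟩

/-- The key invariance lemma. -/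
theorem claim_aux (H : Subgroup (Perm β)) (a b z : β)
    {p : Perm β} (hp : p ∈ Subgroup.closure ((H : Set (Perm β)) ∪ {Equiv.swap a b})) :
    ∀ t, (R H z t ∨ R H a t ∨ R H b t) →
      (R H z (p t) ∨ R H a (p t) ∨ R H b (p t)) ∧ (R H z (p⁻¹ t) ∨ R H a (p⁻¹ t) ∨ R H b (p⁻¹ t)) := by
  induction hp using Subgroup.closure_induction with
  | one => simpa using fun t ht => ht
  | mul x y hx hy ihx ihy =>
    intro t ht
    constructor
    · simpa using (ihx _ ((ihy t ht).1)).1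
    · simpa [mul_inv_rev] using (ihy _ ((ihx t ht).2)).2
  | inv x hx ihx =>
    intro t ht
    refine ⟨(ihx t ht).2, ?_⟩
    simpa using (ihx t ht).1
  | mem x hx =>
    intro t ht
    have key : ∀ q : Perm β, q ∈ (H : Set (Perm β)) ∪ {Equiv.swap a b} →
        (R H z t ∨ R H a t ∨ R H b t) → (R H z (q t) ∨ R H a (q t) ∨ R H b (q t)) := by
      rintro q (hq | hq) ht'
      · rcases ht' with h | h | h
        · exact Or.inl (R_trans h ⟨q, hq, rfl⟩)
        · exact Or.inr (Or.inl (R_trans h ⟨q, hq, rfl⟩))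
        · exact Or.inr (Or.inr (R_trans h ⟨q, hq, rfl⟩))
      · simp only [Set.mem_singleton_iff] at hq
        subst hq
        by_cases hta : t = a
        · subst hta; rw [Equiv.swap_apply_left]
          exact Or.inr (Or.inr (R_refl H b))
        · by_cases htb : t = b
          · subst htb; rw [Equiv.swap_apply_right]
            exact Or.inr (Or.inl (R_refl H a))
          · rwa [Equiv.swap_apply_of_ne_of_ne hta htb]
    refine ⟨key x hx ht, ?_⟩
    have hxinv : x⁻¹ ∈ (H : Set (Perm β)) ∪ {Equiv.swap a b} := by
      rcases hx with hx | hx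
      · exact Or.inl (H.inv_mem hx)
      · simp only [Set.mem_singleton_iff] at hx; subst hx
        exact Or.inr (by simp)
    exact key x⁻¹ hxinv ht

/-- The central structural claim about adding a swap to a group. -/
theorem claim {H : Subgroup (Perm β)} {a b : β}
    {z w : β} (h : R (Subgroup.closure ((H : Set (Perm β)) ∪ {Equiv.swap a b})) z w) :
    R H z w ∨ ((R H a z ∨ R H b z) ∧ (R H a w ∨ R H b w)) := by
  obtain ⟨p, hp, rfl⟩ := h
  have h1 := (claim_aux H a b z hp z (Or.inl (R_refl H z))).1
  rcases h1 with h1 | h1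
  · exact Or.inl h1
  · have h2 := (claim_aux H a b (p z) hp (p z) (Or.inl (R_refl H (p z)))).2
    rw [Equiv.Perm.inv_def, Equiv.symm_apply_apply] at h2
    rcases h2 with h2 | h2
    · exact Or.inl (R_symm h2)
    · exact Or.inr ⟨by tauto, by tauto⟩

noncomputable def norb (H : Subgroup (Perm β)) : ℕ := Nat.card (Quotient (oS H))

theorem norb_mono {H K : Subgroup (Perm β)} (h : H ≤ K) : norb K ≤ norb H := by
  have : Function.Surjective (Quotient.map' (s₁ := oS H) (s₂ := oS K) id
      (fun a b hab => R_mono h hab)) := by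
    intro q
    induction q using Quotient.inductionOn' with
    | h z => exact ⟨Quotient.mk'' z, rfl⟩
  exact Nat.card_le_card_of_surjective _ this

theorem le_clos (H : Subgroup (Perm β)) (τ : Perm β) :
    H ≤ Subgroup.closure ((H : Set (Perm β)) ∪ {τ}) :=
  fun x hx => Subgroup.subset_closure (Or.inl hx)

theorem tau_mem_clos (H : Subgroup (Perm β)) (τ : Perm β) :
    τ ∈ Subgroup.closure ((H : Set (Perm β)) ∪ {τ}) :=
  Subgroup.subset_closure (Or.inr rfl)

/-- L3: if `a ~ b` already in `H`, adding the swap does not change orbits. -/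
theorem norb_clos_eq {H : Subgroup (Perm β)} {a b : β} (hab : R H a b) :
    norb (Subgroup.closure ((H : Set (Perm β)) ∪ {Equiv.swap a b})) = norb H := by
  have hset : oS (Subgroup.closure ((H : Set (Perm β)) ∪ {Equiv.swap a b})) = oS H := by
    apply Setoid.ext
    intro z w
    constructor
    · intro h
      rcases claim h with h | ⟨hz, hw⟩
      · exact h
      · have hz' : R H a z := by rcases hz with h' | h'; exact h'; exact R_trans hab h'
        have hw' : R H a w := by rcases hw with h' | h'; exact h'; exact R_trans hab h'
        exact R_trans (R_symm hz') hw' 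
    · exact R_mono (le_clos H _)
  unfold norb
  rw [hset]

/-- L4: adding a swap decreases the orbit count by at most one. -/
theorem norb_le_clos_add_one (H : Subgroup (Perm β)) (a b : β) :
    norb H ≤ norb (Subgroup.closure ((H : Set (Perm β)) ∪ {Equiv.swap a b})) + 1 := by
  classical
  set G := Subgroup.closure ((H : Set (Perm β)) ∪ {Equiv.swap a b}) with hG
  have hHG : H ≤ G := le_clos H _
  let f : Quotient (oS H) → Option (Quotient (oS G)) :=
    Quotient.lift (fun z => if R H b z then none else some (Quotient.mk (oS G) z))
      (by
        intro z w (hzw : R H z w)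
        by_cases hbz : R H b z
        · rw [if_pos hbz, if_pos (R_trans hbz hzw)]
        · rw [if_neg hbz, if_neg (fun hbw => hbz (R_trans hbw (R_symm hzw)))]
          exact congrArg some (Quotient.sound (R_mono hHG hzw)))
  have hinj : Function.Injective f := by
    intro q q'
    induction q using Quotient.inductionOn' with
    | h z =>
    induction q' using Quotient.inductionOn' with
    | h w =>
    intro h
    show Quotient.mk (oS H) z = Quotient.mk (oS H) w
    simp only [f, Quotient.mk''] at h
    rw [Quotient.lift_mk, Quotient.lift_mk] at h
    by_cases hbz : R H b z <;> by_cases hbw : R H b w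
    · exact Quotient.sound (R_trans (R_symm hbz) hbw)
    · rw [if_pos hbz, if_neg hbw] at h; exact absurd h (by simp)
    · rw [if_neg hbz, if_pos hbw] at h; exact absurd h (by simp)
    · rw [if_neg hbz, if_neg hbw, Option.some_inj] at h
      have hG' : R G z w := Quotient.exact h
      rcases claim hG' with h' | ⟨hz, hw⟩
      · exact Quotient.sound h'
      · have hz' : R H a z := by rcases hz with h' | h'; exact h'; exact absurd h' hbz
        have hw' : R H a w := by rcases hw with h' | h'; exact h'; exact absurd h' hbw
        exact Quotient.sound (R_trans (R_symm hz') hw')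
  calc norb H ≤ Nat.card (Option (Quotient (oS G))) := Nat.card_le_card_of_injective f hinj
    _ = norb G + 1 := by
        simp [norb, Nat.card_eq_fintype_card]

/-- L5: adding a swap joining two distinct orbits decreases the orbit count. -/
theorem clos_add_one_le_norb {H : Subgroup (Perm β)} {a b : β} (hab : ¬ R H a b) :
    norb (Subgroup.closure ((H : Set (Perm β)) ∪ {Equiv.swap a b})) + 1 ≤ norb H := by
  classical
  set G := Subgroup.closure ((H : Set (Perm β)) ∪ {Equiv.swap a b}) with hG
  have hHG : H ≤ G := le_clos H _
  have hGab : R G a b := ⟨Equiv.swap a b, tau_mem_clos H _, Equiv.swap_apply_left a b⟩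
  let χ : β → Quotient (oS H) := fun z =>
    if R H b z then Quotient.mk (oS H) a else Quotient.mk (oS H) z
  have hχa : ∀ z, (R H a z ∨ R H b z) → χ z = Quotient.mk (oS H) a := by
    intro z hz
    by_cases hbz : R H b z
    · simp only [χ, if_pos hbz]
    · have haz : R H a z := hz.resolve_right hbz
      simp only [χ, if_neg hbz]
      exact Quotient.sound (R_symm haz)
  have hwd : ∀ z w, R G z w → χ z = χ w := by
    intro z w hzw
    rcases claim hzw with h | ⟨hz, hw⟩
    · by_cases hbz : R H b z
      · simp only [χ, if_pos hbz, if_pos (R_trans hbz h)]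
      · simp only [χ, if_neg hbz, if_neg (fun hbw => hbz (R_trans hbw (R_symm h)))]
        exact Quotient.sound h
    · rw [hχa z hz, hχa w hw]
  let χbar : Quotient (oS G) → Quotient (oS H) := Quotient.lift χ hwd
  let ψ : Option (Quotient (oS G)) → Quotient (oS H) := fun o =>
    o.elim (Quotient.mk (oS H) b) χbar
  have hne : ∀ z, χ z ≠ Quotient.mk (oS H) b := by
    intro z h
    by_cases hbz : R H b z
    · rw [hχa z (Or.inr hbz)] at h
      exact hab (Quotient.exact h)
    · simp only [χ, if_neg hbz] at h
      exact hbz (R_symm (Quotient.exact h))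
  have hinj : Function.Injective ψ := by
    intro o o' h
    match o, o' with
    | none, none => rfl
    | none, some q =>
      induction q using Quotient.inductionOn' with
      | h z => exact absurd ((hne z) h.symm) (fun h => h)
    | some q, none =>
      induction q using Quotient.inductionOn' with
      | h z => exact absurd ((hne z) h) (fun h => h)
    | some q, some q' =>
      induction q using Quotient.inductionOn' with
      | h z =>
      induction q' using Quotient.inductionOn' with
      | h w =>
      have h' : χ z = χ w := h
      have : R G z w := by
        by_cases hbz : R H b z <;> by_cases hbw : R H b w
        · exact R_mono hHG (R_trans (R_symm hbz) hbw)
        · -- χ z = mk a, χ w = mk w, so R H a w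
          simp only [χ, if_pos hbz, if_neg hbw] at h'
          have haw : R H a w := Quotient.exact h'
          exact R_trans (R_mono hHG (R_symm hbz))
            (R_trans (R_symm hGab) (R_mono hHG haw))
        · simp only [χ, if_neg hbz, if_pos hbw] at h'
          have haz : R H a z := R_symm (Quotient.exact h')
          exact R_trans (R_mono hHG (R_symm haz))
            (R_trans hGab (R_mono hHG hbw))
        · simp only [χ, if_neg hbz, if_neg hbw] at h'
          exact R_mono hHG (Quotient.exact h')
      simp only [Option.some_inj]
      exact Quotient.sound this
  calc norb G + 1 = Nat.card (Option (Quotient (oS G))) := by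
        simp [norb, Nat.card_eq_fintype_card]
    _ ≤ norb H := Nat.card_le_card_of_injective ψ hinj

def Z (u : Perm β) : Subgroup (Perm β) := Subgroup.closure {u}

theorem R_Z_iff {u : Perm β} {z w : β} : R (Z u) z w ↔ u.SameCycle z w := by
  constructor
  · rintro ⟨p, hp, rfl⟩
    obtain ⟨k, rfl⟩ := Subgroup.mem_closure_singleton.1 hp
    exact ⟨k, rfl⟩
  · rintro ⟨k, rfl⟩
    exact ⟨u ^ k, Subgroup.mem_closure_singleton.2 ⟨k, rfl⟩, rfl⟩

/-- number of cycles including fixed points, general version -/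
def ncyc' (g : Perm β) : ℕ :=
  Multiset.card g.cycleType + (Finset.univ.filter fun x => g x = x).card

theorem card_cycleType (g : Perm β) :
    Multiset.card g.cycleType = g.cycleFactorsFinset.card := by
  rw [Equiv.Perm.cycleType_def, Multiset.card_map]; rfl

theorem ncyc'_eq_norb (u : Perm β) : ncyc' u = norb (Z u) := by
  classical
  let f : β → (↥u.cycleFactorsFinset ⊕ {x : β // u x = x}) := fun z =>
    if h : u z = z then Sum.inr ⟨z, h⟩ else
      Sum.inl ⟨u.cycleOf z, Equiv.Perm.cycleOf_mem_cycleFactorsFinset_iff.2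
        (Equiv.Perm.mem_support.2 h)⟩
  have hwd : ∀ z w : β, R (Z u) z w → f z = f w := by
    intro z w hzw
    have hsc : u.SameCycle z w := R_Z_iff.1 hzw
    by_cases hz : u z = z
    · have : w = z := by
        obtain ⟨k, hk⟩ := hsc
        rw [← hk, Equiv.Perm.zpow_apply_eq_self_of_apply_eq_self hz]
      subst this; rfl
    · have hw : ¬ u w = w := by
        intro hw
        obtain ⟨k, hk⟩ := hsc.symm
        rw [← hk, Equiv.Perm.zpow_apply_eq_self_of_apply_eq_self hw] at hz
        exact hz hw
      simp only [f, dif_neg hz, dif_neg hw]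
      exact congrArg Sum.inl (Subtype.ext (hsc.cycleOf_eq))
  let F : Quotient (oS (Z u)) → (↥u.cycleFactorsFinset ⊕ {x : β // u x = x}) :=
    Quotient.lift f hwd
  have hinj : Function.Injective F := by
    intro q q'
    induction q using Quotient.inductionOn' with
    | h z =>
    induction q' using Quotient.inductionOn' with
    | h w =>
    intro h
    have h' : f z = f w := h
    show Quotient.mk (oS (Z u)) z = Quotient.mk (oS (Z u)) w
    by_cases hz : u z = z <;> by_cases hw : u w = w
    · simp only [f, dif_pos hz, dif_pos hw, Sum.inr.injEq, Subtype.mk.injEq] at h'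
      exact Quotient.sound (h' ▸ R_refl _ z)
    · simp [f, dif_pos hz, dif_neg hw] at h'
    · simp [f, dif_neg hz, dif_pos hw] at h'
    · simp only [f, dif_neg hz, dif_neg hw, Sum.inl.injEq, Subtype.mk.injEq] at h'
      have hwmem : w ∈ (u.cycleOf w).support :=
        Equiv.Perm.mem_support_cycleOf_iff.2 ⟨Equiv.Perm.SameCycle.refl u w,
          Equiv.Perm.mem_support.2 hw⟩
      rw [← h'] at hwmem
      exact Quotient.sound (R_Z_iff.2 (Equiv.Perm.mem_support_cycleOf_iff.1 hwmem).1)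
  have hsurj : Function.Surjective F := by
    rintro (⟨c, hc⟩ | ⟨x, hx⟩)
    · have hcyc : c.IsCycle := (Equiv.Perm.mem_cycleFactorsFinset_iff.1 hc).1
      obtain ⟨x, hx, -⟩ := hcyc
      have hxs : x ∈ c.support := Equiv.Perm.mem_support.2 hx
      have hux : ¬ u x = x := by
        have := (Equiv.Perm.mem_cycleFactorsFinset_iff.1 hc).2 x hxs
        rw [← this]; exact hx
      refine ⟨Quotient.mk (oS (Z u)) x, ?_⟩
      show f x = _
      simp only [f, dif_neg hux, Sum.inl.injEq]
      exact Subtype.ext (Equiv.Perm.cycle_is_cycleOf hxs hc).symm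
    · exact ⟨Quotient.mk (oS (Z u)) x, by show f x = _; simp [f, dif_pos hx]⟩
  have hcard := Nat.card_eq_of_bijective F ⟨hinj, hsurj⟩
  rw [norb, hcard, Nat.card_sum]
  simp only [Nat.card_eq_fintype_card, Fintype.card_coe, Fintype.card_subtype]
  rw [ncyc', card_cycleType]
  simp

theorem ncyc'_one : ncyc' (1 : Perm β) = Fintype.card β := by
  simp [ncyc', Equiv.Perm.cycleType_one]

theorem ncyc'_key (v : Perm β) :
    ncyc' v + (v.support.card + Multiset.card v.cycleType)
      = Fintype.card β + 2 * Multiset.card v.cycleType := by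
  have h1 : (Finset.univ.filter fun x => v x = x).card
      + (Finset.univ.filter fun x => ¬ v x = x).card = Fintype.card β := by
    rw [Finset.card_filter_add_card_filter_not]; rfl
  have h2 : v.support = Finset.univ.filter fun x => ¬ v x = x := by
    ext x; simp [Equiv.Perm.mem_support]
  rw [ncyc', h2]
  omega

theorem sign_eq_pow (v : Perm β) :
    Equiv.Perm.sign v = (-1 : ℤˣ) ^ (v.support.card + Multiset.card v.cycleType) := by
  rw [Equiv.Perm.sign_of_cycleType, Equiv.Perm.sum_cycleType]

theorem odd_of_neg_one_pow {k : ℕ} (h : (-1 : ℤˣ) ^ k = -1) : Odd k := by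
  rcases Nat.even_or_odd k with he | ho
  · rw [he.neg_one_pow] at h
    exact absurd h (by decide)
  · exact ho

theorem even_of_neg_one_pow {k : ℕ} (h : (-1 : ℤˣ) ^ k = 1) : Even k := by
  rcases Nat.even_or_odd k with he | ho
  · exact he
  · rw [ho.neg_one_pow] at h
    exact absurd h (by decide)

theorem par (u : Perm β) {a b : β} (hab : a ≠ b) :
    Odd (ncyc' (u * Equiv.swap a b) + ncyc' u) := by
  have hs : Equiv.Perm.sign (u * Equiv.swap a b) = - Equiv.Perm.sign u := by
    rw [map_mul, Equiv.Perm.sign_swap hab, mul_neg, mul_one]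
  rw [sign_eq_pow, sign_eq_pow] at hs
  set e1 := (u * Equiv.swap a b).support.card + Multiset.card (u * Equiv.swap a b).cycleType
  set e2 := u.support.card + Multiset.card u.cycleType
  have hodd : Odd (e1 + e2) := by
    apply odd_of_neg_one_pow
    rw [pow_add, hs]
    rcases Nat.even_or_odd e2 with h | h
    · rw [h.neg_one_pow]; simp
    · rw [h.neg_one_pow]; simp
  have k1 := ncyc'_key (u * Equiv.swap a b)
  have k2 := ncyc'_key (β := β) u
  obtain ⟨t, ht⟩ := hodd
  exact ⟨Fintype.card β + Multiset.card (u * Equiv.swap a b).cycleType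
    + Multiset.card u.cycleType - (t + 1), by omega⟩

theorem mem_Z_self (u : Perm β) : u ∈ Z u := Subgroup.subset_closure rfl

theorem Z_le {u : Perm β} {K : Subgroup (Perm β)} (h : u ∈ K) : Z u ≤ K :=
  (Subgroup.closure_le _).2 (Set.singleton_subset_iff.2 h)

theorem clos_le_aux {u v τ : Perm β} (huv : v = u * τ ∨ v = τ * u) :
    Subgroup.closure ((Z v : Set (Perm β)) ∪ {τ})
      ≤ Subgroup.closure ((Z u : Set (Perm β)) ∪ {τ}) := by
  rw [Subgroup.closure_le]
  apply Set.union_subset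
  · have hu : u ∈ Subgroup.closure ((Z u : Set (Perm β)) ∪ {τ}) :=
      le_clos (Z u) τ (mem_Z_self u)
    have ht := tau_mem_clos (Z u) τ
    have hv : v ∈ Subgroup.closure ((Z u : Set (Perm β)) ∪ {τ}) := by
      rcases huv with rfl | rfl
      · exact mul_mem hu ht
      · exact mul_mem ht hu
    exact fun p hp => Z_le hv hp
  · exact Set.singleton_subset_iff.2 (tau_mem_clos _ _)

theorem clos_Z_swap {u v τ : Perm β} (hτ : τ * τ = 1) (huv : v = u * τ ∨ v = τ * u) :
    Subgroup.closure ((Z u : Set (Perm β)) ∪ {τ})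
      = Subgroup.closure ((Z v : Set (Perm β)) ∪ {τ}) := by
  refine le_antisymm (clos_le_aux ?_) (clos_le_aux huv)
  rcases huv with rfl | rfl
  · left; rw [mul_assoc, hτ, mul_one]
  · right; rw [← mul_assoc, hτ, one_mul]

theorem main_base (x : Perm β) :
    ncyc' x + ncyc' (1 : Perm β) + ncyc' (x * 1)
      ≤ Fintype.card β + 2 * norb (Subgroup.closure {x, (1 : Perm β)}) := by
  have hZ : Subgroup.closure {x, (1 : Perm β)} = Z x := by
    apply le_antisymm
    · rw [Subgroup.closure_le]
      rintro p (rfl | rfl)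
      · exact mem_Z_self _
      · exact one_mem _
    · exact Z_le (Subgroup.subset_closure (Set.mem_insert _ _))
  rw [mul_one, ncyc'_one, hZ, ncyc'_eq_norb]
  omega

theorem main_ineq : ∀ (k : ℕ) (x y : Perm β), y.support.card ≤ k →
    ncyc' x + ncyc' y + ncyc' (x * y)
      ≤ Fintype.card β + 2 * norb (Subgroup.closure {x, y}) := by
  intro k
  induction k with
  | zero =>
    intro x y hcard
    have hy : y = 1 := by
      rw [← Equiv.Perm.support_eq_empty_iff]
      exact Finset.card_eq_zero.1 (Nat.le_zero.1 hcard)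
    subst hy; exact main_base x
  | succ k ih =>
    intro x y hcard
    by_cases hy1 : y = 1
    · subst hy1; exact main_base x
    · obtain ⟨a, ha⟩ : ∃ a, y a ≠ a := by
        by_contra h
        push_neg at h
        exact hy1 (Equiv.ext h)
      set b := y a with hb
      have hab : a ≠ b := fun h => ha h.symm
      set τ := Equiv.swap a b with hτdef
      have hττ : τ * τ = 1 := Equiv.swap_mul_self a b
      set x' := x * τ with hx'
      set y' := τ * y with hy'
      have hxx : x' * τ = x := by rw [hx', mul_assoc, hττ, mul_one]
      have hyy : τ * y' = y := by rw [hy', ← mul_assoc, hττ, one_mul]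
      have hxy : x' * y' = x * y := by
        rw [hx', hy', mul_assoc, ← mul_assoc τ, hττ, one_mul]
      have hy'a : y' a = a := by
        simp only [hy', Equiv.Perm.mul_apply, ← hb, hτdef]
        exact Equiv.swap_apply_right a b
      -- support of y' strictly smaller
      have hamem : a ∈ y.support := Equiv.Perm.mem_support.2 ha
      have hsupp : y'.support.card ≤ k := by
        have hsub : y'.support ⊆ y.support.erase a := by
          intro z hz
          rw [Finset.mem_erase]
          have hzy' : y' z ≠ z := Equiv.Perm.mem_support.1 hz
          have hza : z ≠ a := fun h => hzy' (h ▸ hy'a)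
          refine ⟨hza, Equiv.Perm.mem_support.2 fun hyz => ?_⟩
          have hzb : z ≠ b := by
            intro h
            subst h
            exact hab ((y.injective (hyz.trans hb)).symm)
          apply hzy'
          simp only [hy', Equiv.Perm.mul_apply, hyz, hτdef]
          exact Equiv.swap_apply_of_ne_of_ne hza hzb
        calc y'.support.card ≤ (y.support.erase a).card := Finset.card_le_card hsub
          _ = y.support.card - 1 := Finset.card_erase_of_mem hamem
          _ ≤ k := by omega
      have IH := ih x' y' hsupp
      -- (A) : ncyc' y + 1 ≤ ncyc' y'
      have hRyab : R (Z y) a b := ⟨y, mem_Z_self y, hb.symm⟩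
      have hA : ncyc' y + 1 ≤ ncyc' y' := by
        have h5 : ¬ R (Z y') a b := by
          rintro h
          obtain ⟨j, hj⟩ := R_Z_iff.1 h
          rw [Equiv.Perm.zpow_apply_eq_self_of_apply_eq_self hy'a] at hj
          exact hab hj
        have h5' := clos_add_one_le_norb h5
        have heq : Subgroup.closure ((Z y' : Set (Perm β)) ∪ {τ})
            = Subgroup.closure ((Z y : Set (Perm β)) ∪ {τ}) :=
          (clos_Z_swap hττ (Or.inr hy')).symm
        rw [heq, norb_clos_eq hRyab] at h5'
        rw [ncyc'_eq_norb, ncyc'_eq_norb]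
        omega
      -- (B)
      set G₂ := Subgroup.closure ((Subgroup.closure {x', y'} : Set (Perm β)) ∪ {τ}) with hG₂
      have hxyle : Subgroup.closure {x, y} ≤ G₂ := by
        rw [Subgroup.closure_le]
        have hx'mem : x' ∈ G₂ := le_clos _ _ (Subgroup.subset_closure (by simp))
        have hy'mem : y' ∈ G₂ := le_clos _ _ (Subgroup.subset_closure (by simp))
        have hτmem : τ ∈ G₂ := tau_mem_clos _ _
        rintro p (rfl | rfl)
        · exact hxx ▸ mul_mem hx'mem hτmem
        · exact hyy ▸ mul_mem hτmem hy'mem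
      have hc : norb G₂ ≤ norb (Subgroup.closure {x, y}) := norb_mono hxyle
      rw [← hxy]
      by_cases hsc : R (Z x') a b
      -- merge case
      · have hG₂eq : norb G₂ = norb (Subgroup.closure {x', y'}) :=
          norb_clos_eq (R_mono (Z_le (Subgroup.subset_closure (by simp))) hsc)
        have hC : ncyc' x ≤ ncyc' x' + 1 := by
          have h4 := norb_le_clos_add_one (Z x) a b
          have hmon : norb (Subgroup.closure ((Z x : Set (Perm β)) ∪ {τ}))
              ≤ norb (Z x') :=
            norb_mono (Z_le (mul_mem (le_clos _ _ (mem_Z_self x)) (tau_mem_clos _ _)))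
          rw [ncyc'_eq_norb, ncyc'_eq_norb]
          rw [← hτdef] at h4
          omega
        omega
      -- split case
      · have hC : ncyc' x + 1 ≤ ncyc' x' := by
          have hle : ncyc' x ≤ ncyc' x' := by
            have h5 := clos_add_one_le_norb hsc
            have h4 := norb_le_clos_add_one (Z x) a b
            have heq : Subgroup.closure ((Z x : Set (Perm β)) ∪ {τ})
                = Subgroup.closure ((Z x' : Set (Perm β)) ∪ {τ}) :=
              clos_Z_swap hττ (Or.inl hx')
            rw [ncyc'_eq_norb, ncyc'_eq_norb]
            rw [← hτdef] at h4 h5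
            rw [heq] at h4
            omega
          have hodd : Odd (ncyc' x + ncyc' x') := by
            have := par x' hab
            rwa [← hτdef, hxx] at this
          obtain ⟨t, ht⟩ := hodd
          omega
        have hD : norb (Subgroup.closure {x', y'}) ≤ norb G₂ + 1 :=
          norb_le_clos_add_one _ a b
        omega

theorem ncyc'_inv (g : Perm β) : ncyc' g⁻¹ = ncyc' g := by
  unfold ncyc'
  rw [Equiv.Perm.cycleType_inv]
  congr 2
  ext x
  simp only [Finset.mem_filter, Finset.mem_univ, true_and]
  constructor
  · intro h; conv_lhs => rw [← h]
    simp
  · intro h; conv_lhs => rw [← h]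
    simp

theorem ncyc'_alpha {n : ℕ} (hn : 0 < n) (α : Perm (Fin (2 * n)))
    (hinv : α * α = 1) (hfpf : ∀ x, α x ≠ x) : ncyc' α = n := by
  have hsupp : α.support = Finset.univ := by
    ext x; simp [Equiv.Perm.mem_support, hfpf x]
  have hfix : (Finset.univ.filter fun x => α x = x) = ∅ := by
    apply Finset.filter_eq_empty_iff.2
    intro x _
    exact hfpf x
  have hct2 : ∀ c ∈ α.cycleType, c = 2 := by
    intro c hc
    have h2 : 2 ≤ c := Equiv.Perm.two_le_of_mem_cycleType hc
    have hdvd : c ∣ orderOf α := by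
      rw [← Equiv.Perm.lcm_cycleType]
      exact Multiset.dvd_lcm hc
    have ho2 : orderOf α ∣ 2 := orderOf_dvd_of_pow_eq_one (by rw [pow_two]; exact hinv)
    have := Nat.le_of_dvd two_pos (hdvd.trans ho2)
    omega
  have hrep : α.cycleType = Multiset.replicate (Multiset.card α.cycleType) 2 :=
    Multiset.eq_replicate_of_mem hct2
  have hsum : α.cycleType.sum = 2 * n := by
    rw [Equiv.Perm.sum_cycleType, hsupp, Finset.card_univ, Fintype.card_fin]
  rw [hrep, Multiset.sum_replicate, smul_eq_mul] at hsum
  rw [ncyc', hfix]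
  simp only [Finset.card_empty, add_zero]
  omega

theorem euler_genus_formula_aux {n : ℕ} (σ α φ : Equiv.Perm (Fin (2 * n)))
    (hσαφ : σ * α * φ = 1)
    (hinv : α * α = 1) (hfpf : ∀ x, α x ≠ x)
    (htrans : ∀ a b : Fin (2 * n), ∃ p ∈ Subgroup.closure ({σ, α} :
      Set (Equiv.Perm (Fin (2 * n)))), p a = b) :
    ∃ g : ℕ, ncyc' σ + ncyc' φ + 2 * g = n + 2 := by
  rcases Nat.eq_zero_or_pos n with rfl | hn
  · have hσ : σ = 1 := by
      ext x
      exact absurd x.isLt (by omega)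
    have hφ : φ = 1 := by
      ext x
      exact absurd x.isLt (by omega)
    refine ⟨1, ?_⟩
    rw [hσ, hφ, ncyc'_one, Fintype.card_fin]
  -- main case
  · have hcard : Fintype.card (Fin (2 * n)) = 2 * n := Fintype.card_fin _
    have hα : ncyc' α = n := ncyc'_alpha hn α hinv hfpf
    -- transitivity gives one orbit
    have hone : norb (Subgroup.closure ({σ, α} : Set (Perm (Fin (2 * n))))) = 1 := by
      rw [norb, Nat.card_eq_one_iff_unique]
      constructor
      · constructor
        intro q q'
        induction q using Quotient.inductionOn' with
        | h z =>
        induction q' using Quotient.inductionOn' with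
        | h w =>
        exact Quotient.sound (htrans z w)
      · exact ⟨Quotient.mk _ ⟨0, by omega⟩⟩
    have hineq := main_ineq (α.support.card) σ α le_rfl
    rw [hone, hcard, hα] at hineq
    -- φ = (σ * α)⁻¹
    have hφ : φ = (σ * α)⁻¹ := eq_inv_of_mul_eq_one_right hσαφ
    have hφn : ncyc' φ = ncyc' (σ * α) := by rw [hφ, ncyc'_inv]
    -- parity
    have hsign : Equiv.Perm.sign σ * Equiv.Perm.sign α * Equiv.Perm.sign φ = 1 := by
      rw [← map_mul, ← map_mul, hσαφ, map_one]
    rw [sign_eq_pow, sign_eq_pow, sign_eq_pow, ← pow_add, ← pow_add] at hsign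
    have heven := even_of_neg_one_pow hsign
    have k1 := ncyc'_key σ
    have k2 := ncyc'_key α
    have k3 := ncyc'_key φ
    rw [hcard] at k1 k2 k3
    obtain ⟨t, ht⟩ := heven
    -- Even (ncyc' σ + ncyc' α + ncyc' φ), with hα : ncyc' α = n
    -- combine: goal
    refine ⟨(n + 2 - (ncyc' σ + ncyc' φ)) / 2, ?_⟩
    rw [hφn] at *
    omega

theorem ncyc_eq_ncyc' {m : ℕ} (g : Equiv.Perm (Fin m)) : ncyc g = ncyc' g := rfl

end EulerGenusAux

/-- Euler genus formula via permutations: for a map `⟨σ, α, φ⟩` with `n` edges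
(`σαφ = 1`, `α` a fixed-point free involution, the group `⟨σ, α⟩` transitive on
`[2n]`, so `n(α) = n`), there is a genus `g ≥ 0` with
`n(σ) - n(α) + n(φ) = 2 - 2g`; equivalently `n(σ) + n(φ) + 2g = n + 2`. -/
theorem euler_genus_formula {n : ℕ} (σ α φ : Equiv.Perm (Fin (2 * n)))
    (hσαφ : σ * α * φ = 1)
    (hinv : α * α = 1) (hfpf : ∀ x, α x ≠ x)
    (htrans : ∀ a b : Fin (2 * n), ∃ p ∈ Subgroup.closure ({σ, α} :
      Set (Equiv.Perm (Fin (2 * n)))), p a = b) :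
    ∃ g : ℕ, ncyc σ + ncyc φ + 2 * g = n + 2 := by
  rw [EulerGenusAux.ncyc_eq_ncyc', EulerGenusAux.ncyc_eq_ncyc']
  exact EulerGenusAux.euler_genus_formula_aux σ α φ hσαφ hinv hfpf htrans
end
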